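/- Let f_c be an exponential map, and suppose a dynamic ray g_s lands at c, the address s satisfies: the Euclidean length of the arcs g_{σ^n s}((0,t]) tends to 0 uniformly in n as t → 0, and c is non-recurrent (there is ε > 0 with dist(c, P(f_c)) > ε where P(f_c) is the closure of the forward orbit of c). Assume additionally the transversal continuity property: if σ^{k_j} s → s then g_{σ^{k_j} s}(t_0) → g_s(t_0) for fixed t_0 > 0. Then the address s is non-recurrent, i.e. s ∉ closure of {σ^n s : n ≥ 1}. -/

import Mathlib

/-! The uniform length bound puts every landing point `f_c^n(c)`, including `c` itself, within
`ε/3` of the ray point `g_{σ^n s}(t₀)` for one fixed small `t₀`. If shifts `σ^{k_j} s`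
accumulated at `s`, transversal continuity would bring `g_{σ^{k_j} s}(t₀)` within `ε/3` of
`g_s(t₀)`, hence the postsingular points `f_c^{k_j}(c)` within `ε` of `c`. -/

/-- The exponential map `f_c(z) = e^z + c`. -/
noncomputable def expMap (c : ℂ) : ℂ → ℂ := fun z => Complex.exp z + c

/-- The postsingular set: closure of the forward orbit `{f_c^n(c) : n ≥ 1}`. -/
noncomputable def postsingular (c : ℂ) : Set ℂ :=
  closure (Set.range fun n : ℕ => (expMap c)^[n + 1] c)

/-- The distance `d(s,s') = ∑_{i : s_i ≠ s'_i} 2^{-i}` on addresses. -/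
noncomputable def seqDist (s s' : ℕ → ℤ) : ℝ :=
  ∑' i : ℕ, if s i ≠ s' i then ((1 : ℝ) / 2) ^ i else 0

/-- The left shift on addresses. -/
def shift (s : ℕ → ℤ) : ℕ → ℤ := fun i => s (i + 1)

open Filter Set Topology

lemma seqDist_nonneg (s s' : ℕ → ℤ) : 0 ≤ seqDist s s' :=
  tsum_nonneg fun i => by split <;> positivity

lemma iterate_mem_postsingular (c : ℂ) {n : ℕ} (hn : 1 ≤ n) :
    (expMap c)^[n] c ∈ postsingular c := by
  obtain ⟨m, rfl⟩ := Nat.exists_eq_add_of_le' hn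
  exact subset_closure ⟨m, rfl⟩

theorem edist_le_eVariationOn_of_tendsto_nhdsGT {α E : Type*} [LinearOrder α]
    [TopologicalSpace α] [OrderTopology α] [DenselyOrdered α] [PseudoEMetricSpace E]
    {f : α → E} {a b : α} {x : E} (hab : a < b) (hf : Tendsto f (𝓝[>] a) (𝓝 x)) :
    edist x (f b) ≤ eVariationOn f (Ioc a b) := by
  have := nhdsGT_neBot_of_exists_gt ⟨b, hab⟩
  refine le_of_tendsto (hf.edist tendsto_const_nhds) ?_
  filter_upwards [Ioc_mem_nhdsGT hab] with t ht
  exact eVariationOn.edist_le f ht (right_mem_Ioc.mpr hab)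

theorem dist_lt_of_tendsto_nhdsGT_of_eVariationOn_lt {α E : Type*} [LinearOrder α]
    [TopologicalSpace α] [OrderTopology α] [DenselyOrdered α] [PseudoMetricSpace E]
    {f : α → E} {a b : α} {x : E} {ε : ℝ} (hab : a < b) (hf : Tendsto f (𝓝[>] a) (𝓝 x))
    (hvar : eVariationOn f (Ioc a b) < ENNReal.ofReal ε) : dist x (f b) < ε :=
  edist_lt_ofReal.mp ((edist_le_eVariationOn_of_tendsto_nhdsGT hab hf).trans_lt hvar)

theorem exists_seq_tendsto_zero_of_not_exists_le {u : ℕ → ℝ} (hu : ∀ n, 0 ≤ u n)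
    (h : ¬∃ ε > 0, ∀ n, 1 ≤ n → ε ≤ u n) :
    ∃ k : ℕ → ℕ, (∀ j, 1 ≤ k j) ∧ Tendsto (fun j => u (k j)) atTop (𝓝 0) := by
  push Not at h
  choose k hk₁ hk using fun j : ℕ => h (1 / ((j : ℝ) + 1)) (by positivity)
  exact ⟨k, hk₁, squeeze_zero (fun j => hu _) (fun j => (hk j).le)
    tendsto_one_div_add_atTop_nhds_zero_nat⟩

/-- If the ray `g_s` lands at `c` (and `g_{σ^k s}` lands at `f_c^k(c)`), the lengths of
the arcs `g_{σ^n s}((0,t])` tend to `0` uniformly in `n` as `t → 0`, `c` is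
non-recurrent, and transversal continuity holds, then the address `s` is
non-recurrent: it stays a definite distance away from all its shifts. -/
theorem stmt16 (c : ℂ) (g : (ℕ → ℤ) → ℝ → ℂ) (s : ℕ → ℤ)
    (hland : ∀ k : ℕ, Filter.Tendsto (g (shift^[k] s))
      (nhdsWithin 0 (Set.Ioi 0)) (nhds ((expMap c)^[k] c)))
    (hlen : ∀ ε > (0 : ℝ), ∃ tε > (0 : ℝ), ∀ (n : ℕ) (t : ℝ), 0 < t → t < tε →
      eVariationOn (g (shift^[n] s)) (Set.Ioc 0 t) < ENNReal.ofReal ε)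
    (hnr : ∃ ε > (0 : ℝ), ∀ z ∈ postsingular c, ε < dist c z)
    (htrans : ∀ (k : ℕ → ℕ) (t0 : ℝ), 0 < t0 →
      Filter.Tendsto (fun j => seqDist s (shift^[k j] s)) Filter.atTop (nhds 0) →
      Filter.Tendsto (fun j => g (shift^[k j] s) t0) Filter.atTop (nhds (g s t0))) :
    ∃ ε > (0 : ℝ), ∀ n : ℕ, 1 ≤ n → ε ≤ seqDist s (shift^[n] s) := by
  obtain ⟨ε, hε, hfar⟩ := hnr
  obtain ⟨tε, htε, hvar⟩ := hlen (ε / 3) (by positivity)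
  obtain ⟨t₀, ht₀, ht₀ε⟩ := exists_between htε
  have hnear : ∀ n, dist ((expMap c)^[n] c) (g (shift^[n] s) t₀) < ε / 3 := fun n =>
    dist_lt_of_tendsto_nhdsGT_of_eVariationOn_lt ht₀ (hland n) (hvar n t₀ ht₀ ht₀ε)
  by_contra hrec
  obtain ⟨k, hk₁, hk⟩ := exists_seq_tendsto_zero_of_not_exists_le
    (fun n => seqDist_nonneg s (shift^[n] s)) hrec
  obtain ⟨j, hj⟩ :=
    (Metric.tendsto_nhds.mp (htrans k t₀ ht₀ hk) (ε / 3) (by positivity)).exists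
  have hfar_kj := hfar _ (iterate_mem_postsingular c (hk₁ j))
  have hc : dist c (g s t₀) < ε / 3 := hnear 0
  have hclose : dist c ((expMap c)^[k j] c) < ε := calc
    _ ≤ dist c (g s t₀) + dist (g s t₀) (g (shift^[k j] s) t₀)
        + dist (g (shift^[k j] s) t₀) ((expMap c)^[k j] c) := dist_triangle4 _ _ _ _
    _ < ε / 3 + ε / 3 + ε / 3 := by
      gcongr
      exacts [(dist_comm _ _).trans_lt hj, (dist_comm _ _).trans_lt (hnear (k j))]
    _ = ε := by ring
  exact hfar_kj.not_gt hclose
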